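/- arXiv:2605.05186 — 3 statements merged into one kernel-verified Lean document; each statement's English description precedes it below -/
import Mathlib

section
/- Jacobi triple product: for |q| < 1 and z ≠ 0, the product (z;q)_∞ (q/z;q)_∞ (q;q)_∞ equals the sum over all integers n of (-1)^n q^(n(n-1)/2) z^n. -/
open scoped BigOperators
open Complex

open Filter Finset

noncomputable def JTP.P (q : ℂ) (k : ℕ) : ℂ := ∏ j ∈ Finset.range k, (1 - q ^ (j + 1))

noncomputable def JTP.c (q : ℂ) : ℕ → ℕ → ℂ
  | 0, 0 => 1
  | 0, _ + 1 => 0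
  | _ + 1, 0 => 1
  | N + 1, k + 1 => JTP.c q N (k + 1) + q ^ (N - k) * JTP.c q N k

namespace JTP

lemma c_zero_right (q : ℂ) (N : ℕ) : c q N 0 = 1 := by cases N <;> rfl

lemma c_eq_zero (q : ℂ) : ∀ N k, N < k → c q N k = 0 := by
  intro N
  induction N with
  | zero => intro k hk; match k, hk with | k+1, _ => rfl
  | succ N ih =>
    intro k hk
    match k, hk with
    | k+1, hk =>
      show c q N (k+1) + q ^ (N - k) * c q N k = 0
      rw [ih (k+1) (by omega), ih k (by omega)]; ring

lemma c_diag (q : ℂ) : ∀ N, c q N N = 1 := by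
  intro N
  induction N with
  | zero => rfl
  | succ N ih =>
    show c q N (N+1) + q ^ (N - N) * c q N N = 1
    rw [c_eq_zero q N (N+1) (by omega), ih]; simp

lemma P_succ (q : ℂ) (k : ℕ) : P q (k + 1) = P q k * (1 - q ^ (k + 1)) :=
  Finset.prod_range_succ _ _

/-- quotient formula, in division-free form -/
lemma c_mul (q : ℂ) : ∀ N k, k ≤ N → c q N k * (P q k * P q (N - k)) = P q N := by
  intro N
  induction N with
  | zero => intro k hk; interval_cases k; simp [c, P]
  | succ N ih =>
    intro k hk
    match k with
    | 0 => simp [c_zero_right, P]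
    | k + 1 =>
      by_cases hkN : k + 1 ≤ N
      · have ihk : c q N k * (P q k * P q (N - k)) = P q N := ih k (by omega)
        have ihk1 : c q N (k+1) * (P q (k+1) * P q (N - (k+1))) = P q N := ih (k+1) hkN
        show (c q N (k+1) + q ^ (N - k) * c q N k) * (P q (k+1) * P q (N + 1 - (k+1))) = P q (N+1)
        have h3 : P q (N + 1 - (k+1)) = P q (N - (k+1)) * (1 - q ^ (N - k)) := by
          rw [show N + 1 - (k+1) = (N - (k+1)) + 1 from by omega, P_succ,
            show N - (k+1) + 1 = N - k from by omega]
        have h5 : P q (N - k) = P q (N - (k+1)) * (1 - q ^ (N - k)) := by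
          rw [show N - k = (N - (k+1)) + 1 from by omega, P_succ,
            show N - (k+1) + 1 = N - k from by omega]
        have hab : q ^ (N - k) * q ^ (k+1) = q ^ (N+1) := by
          rw [← pow_add]; congr 1; omega
        have hPN1 : P q (N+1) = P q N * (1 - q ^ (N+1)) := P_succ q N
        rw [h3, P_succ q k, hPN1, ← hab] at *
        rw [h5] at ihk
        linear_combination (1 - q ^ (N-k)) * ihk1 + q ^ (N-k) * (1 - q^(k+1)) * ihk
      · have hN : N = k := by omega
        subst hN
        show c q (N+1) (N+1) * (P q (N+1) * P q (N + 1 - (N+1))) = P q (N+1)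
        rw [c_diag, Nat.sub_self]
        show 1 * (P q (N+1) * ∏ j ∈ Finset.range 0, (1 - q ^ (j+1))) = P q (N+1)
        simp
lemma geom_bound {r : ℝ} (h0 : 0 ≤ r) (h1 : r < 1) (n : ℕ) :
    ∑ i ∈ Finset.range n, r ^ i ≤ (1 - r)⁻¹ := by
  have hr1 : (0:ℝ) < 1 - r := by linarith
  rw [geom_sum_eq (by intro h; rw [h] at h1; exact lt_irrefl _ h1)]
  rw [div_le_iff_of_neg (by linarith : r - 1 < 0)]
  have hrn : 0 ≤ r ^ n := pow_nonneg h0 n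
  have : (1 - r)⁻¹ * (r - 1) = -1 := by field_simp; ring
  rw [this]
  linarith

/-- Weierstrass product inequality. -/
lemma one_sub_sum_le_prod (n : ℕ) (f : ℕ → ℝ) (h0 : ∀ i, 0 ≤ f i) (h1 : ∀ i, f i ≤ 1) :
    1 - ∑ i ∈ Finset.range n, f i ≤ ∏ i ∈ Finset.range n, (1 - f i) := by
  induction n with
  | zero => simp
  | succ n ih =>
    rw [Finset.sum_range_succ, Finset.prod_range_succ]
    have hp0 : (0:ℝ) ≤ ∏ i ∈ Finset.range n, (1 - f i) :=
      Finset.prod_nonneg fun i _ => by linarith [h1 i]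
    have hp1 : ∏ i ∈ Finset.range n, (1 - f i) ≤ 1 :=
      Finset.prod_le_one (fun i _ => by linarith [h1 i]) (fun i _ => by linarith [h0 i])
    nlinarith [h0 n, h1 n]

/-- Uniform positive lower bound for the real partial products. -/
lemma exists_lower_bound {r : ℝ} (h0 : 0 ≤ r) (h1 : r < 1) :
    ∃ δ : ℝ, 0 < δ ∧ ∀ m : ℕ, δ ≤ ∏ j ∈ Finset.range m, (1 - r ^ (j+1)) := by
  obtain ⟨J, hJ⟩ : ∃ J : ℕ, r ^ J < (1 - r) / 2 :=
    exists_pow_lt_of_lt_one (by linarith) h1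
  have hfac : ∀ j : ℕ, 0 < 1 - r ^ (j+1) := fun j => by
    have : r ^ (j+1) < 1 := pow_lt_one₀ h0 h1 (Nat.succ_ne_zero j)
    linarith
  set δ0 : ℝ := ∏ j ∈ Finset.range J, (1 - r ^ (j+1)) with hδ0
  have hδ0pos : 0 < δ0 := Finset.prod_pos fun j _ => hfac j
  refine ⟨δ0 / 2, by positivity, fun m => ?_⟩
  rcases le_or_gt m J with hmJ | hmJ
  · have : δ0 ≤ ∏ j ∈ Finset.range m, (1 - r ^ (j+1)) := by
      have hsplit : δ0 = (∏ j ∈ Finset.range m, (1 - r ^ (j+1))) *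
          ∏ i ∈ Finset.range (J - m), (1 - r ^ (m + i + 1)) := by
        rw [hδ0, ← Finset.prod_range_add (fun j => 1 - r ^ (j+1)) m (J - m),
          show m + (J - m) = J from by omega]
      rw [hsplit]
      have h2 : ∏ i ∈ Finset.range (J - m), (1 - r ^ (m + i + 1)) ≤ 1 :=
        Finset.prod_le_one (fun i _ => le_of_lt (hfac (m + i))) (fun i _ => by
          have := pow_nonneg h0 (m + i + 1); linarith)
      have h3 : 0 ≤ ∏ j ∈ Finset.range m, (1 - r ^ (j+1)) :=
        Finset.prod_nonneg fun j _ => le_of_lt (hfac j)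
      nlinarith
    linarith
  · have hsplit : ∏ j ∈ Finset.range m, (1 - r ^ (j+1))
        = δ0 * ∏ i ∈ Finset.range (m - J), (1 - r ^ (J + i + 1)) := by
      rw [hδ0, ← Finset.prod_range_add (fun j => 1 - r ^ (j+1)) J (m - J),
        show J + (m - J) = m from by omega]
    have htail : ∑ i ∈ Finset.range (m - J), r ^ (J + i + 1) ≤ 1/2 := by
      have : ∀ i, r ^ (J + i + 1) = r ^ (J+1) * r ^ i := fun i => by
        rw [← pow_add]; congr 1; omega
      calc ∑ i ∈ Finset.range (m - J), r ^ (J + i + 1)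
          = r ^ (J+1) * ∑ i ∈ Finset.range (m - J), r ^ i := by
            rw [Finset.mul_sum]; exact Finset.sum_congr rfl fun i _ => this i
        _ ≤ r ^ (J+1) * (1 - r)⁻¹ := by
            have := geom_bound h0 h1 (m - J)
            have hrJ : (0:ℝ) ≤ r ^ (J+1) := pow_nonneg h0 _
            exact mul_le_mul_of_nonneg_left this hrJ
        _ ≤ 1/2 := by
            have hrJ : r ^ (J+1) ≤ r ^ J := pow_le_pow_of_le_one h0 (le_of_lt h1) (by omega)
            have h2 : r ^ (J+1) ≤ (1 - r)/2 := le_trans hrJ (le_of_lt hJ)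
            have h3 : (0:ℝ) < 1 - r := by linarith
            calc r ^ (J+1) * (1-r)⁻¹ ≤ (1-r)/2 * (1-r)⁻¹ :=
                  mul_le_mul_of_nonneg_right h2 (by positivity)
              _ = 1/2 := by field_simp
    have hW : 1 - ∑ i ∈ Finset.range (m - J), r ^ (J + i + 1)
        ≤ ∏ i ∈ Finset.range (m - J), (1 - r ^ (J + i + 1)) :=
      one_sub_sum_le_prod _ _ (fun i => pow_nonneg h0 _)
        (fun i => le_of_lt (by have := hfac (J + i); linarith))
    rw [hsplit]
    have : (1:ℝ)/2 ≤ ∏ i ∈ Finset.range (m - J), (1 - r ^ (J + i + 1)) := by linarith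
    nlinarith

/-- Uniform upper bound for partial products of `1 + r^{j+1}`. -/
lemma upper_bound {r : ℝ} (h0 : 0 ≤ r) (h1 : r < 1) (m : ℕ) :
    ∏ j ∈ Finset.range m, (1 + r ^ (j+1)) ≤ Real.exp ((1 - r)⁻¹) := by
  have step : ∏ j ∈ Finset.range m, (1 + r ^ (j+1))
      ≤ ∏ j ∈ Finset.range m, Real.exp (r ^ (j+1)) := by
    refine Finset.prod_le_prod (fun j _ => by positivity) (fun j _ => ?_)
    have := Real.add_one_le_exp (r ^ (j+1))
    linarith
  refine le_trans step ?_
  rw [← Real.exp_sum]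
  apply Real.exp_le_exp.mpr
  calc ∑ j ∈ Finset.range m, r ^ (j+1) ≤ ∑ j ∈ Finset.range m, r ^ j :=
        Finset.sum_le_sum fun j _ => pow_le_pow_of_le_one h0 (le_of_lt h1) (by omega)
    _ ≤ (1 - r)⁻¹ := geom_bound h0 h1 m

/-- Norm bounds for the complex partial products `P`. -/
lemma P_norm_bounds {q : ℂ} (hq : ‖q‖ < 1) :
    ∃ δ C : ℝ, 0 < δ ∧ 0 < C ∧ ∀ m : ℕ,
      δ ≤ ‖P q m‖ ∧ ‖P q m‖ ≤ C := by
  have h0 : 0 ≤ ‖q‖ := norm_nonneg q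
  obtain ⟨δ, hδpos, hδ⟩ := exists_lower_bound h0 hq
  refine ⟨δ, Real.exp ((1 - ‖q‖)⁻¹), hδpos, Real.exp_pos _, fun m => ?_⟩
  have habs : ‖P q m‖ = ∏ j ∈ Finset.range m, ‖1 - q ^ (j+1)‖ := by
    rw [P, norm_prod]
  constructor
  · refine le_trans (hδ m) ?_
    rw [habs]
    refine Finset.prod_le_prod (fun j _ => ?_) (fun j _ => ?_)
    · have : ‖q‖ ^ (j+1) < 1 := pow_lt_one₀ h0 hq (Nat.succ_ne_zero j)
      linarith
    · have h1' : ‖(1:ℂ)‖ - ‖q ^ (j+1)‖ ≤ ‖(1:ℂ) - q^(j+1)‖ := norm_sub_norm_le _ _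
      simpa [norm_pow] using h1'
  · rw [habs]
    refine le_trans ?_ (upper_bound h0 hq m)
    refine Finset.prod_le_prod (fun j _ => norm_nonneg _) (fun j _ => ?_)
    have h1' : ‖(1:ℂ) - q^(j+1)‖ ≤ ‖(1:ℂ)‖ + ‖q ^ (j+1)‖ := norm_sub_le _ _
    simpa [norm_pow] using h1'

lemma T_succ (k : ℕ) : (k+1)*k/2 = k*(k-1)/2 + k := by
  have h1 : (k+1).choose 2 = (k+1)*k/2 := by simpa using Nat.choose_two_right (k+1)
  have h2 : k.choose 2 = k*(k-1)/2 := Nat.choose_two_right k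
  have h3 : (k+1).choose 2 = k + k.choose 2 := by simpa using Nat.choose_succ_succ k 1
  omega

theorem qbinom (q y : ℂ) (N : ℕ) :
    ∏ i ∈ Finset.range N, (1 + y * q ^ i)
      = ∑ k ∈ Finset.range (N+1), c q N k * q ^ (k*(k-1)/2) * y ^ k := by
  induction N with
  | zero => simp [c]
  | succ N ih =>
    rw [Finset.prod_range_succ, ih,
      Finset.sum_range_succ' (fun k => c q (N+1) k * q ^ (k*(k-1)/2) * y ^ k) (N+1)]
    have hS : (∑ k ∈ Finset.range (N+1), c q N k * q^(k*(k-1)/2) * y^k)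
        = (∑ k ∈ Finset.range (N+1), c q N (k+1) * q^((k+1)*((k+1)-1)/2) * y^(k+1))
          + c q N 0 * q^(0*(0-1)/2) * y^0 := by
      rw [← Finset.sum_range_succ' (fun k => c q N k * q^(k*(k-1)/2) * y^k) (N+1),
        Finset.sum_range_succ (fun k => c q N k * q^(k*(k-1)/2) * y^k) (N+1),
        c_eq_zero q N (N+1) (by omega)]
      ring
    have hsplit : ∀ k ∈ Finset.range (N+1),
        c q (N+1) (k+1) * q ^ ((k+1)*((k+1)-1)/2) * y^(k+1)
          = c q N (k+1) * q ^ ((k+1)*((k+1)-1)/2) * y^(k+1)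
            + (y * q^N) * (c q N k * q ^ (k*(k-1)/2) * y^k) := by
      intro k hk
      have hc : c q (N+1) (k+1) = c q N (k+1) + q ^ (N-k) * c q N k := rfl
      have he : (k+1)*((k+1)-1)/2 = k*(k-1)/2 + k := by
        simpa using T_succ k
      have hq : q ^ (N-k) * q ^ (k*(k-1)/2 + k) = q ^ N * q ^ (k*(k-1)/2) := by
        rw [← pow_add, ← pow_add]; congr 1
        have : k ≤ N := by simpa using Finset.mem_range_succ_iff.mp hk
        omega
      rw [hc, he, add_mul, add_mul]
      congr 1
      calc q ^ (N-k) * c q N k * q ^ (k*(k-1)/2 + k) * y^(k+1)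
          = c q N k * (q ^ (N-k) * q ^ (k*(k-1)/2 + k)) * y^(k+1) := by ring
        _ = c q N k * (q ^ N * q ^ (k*(k-1)/2)) * y^(k+1) := by rw [hq]
        _ = (y * q^N) * (c q N k * q ^ (k*(k-1)/2) * y^k) := by ring
    rw [Finset.sum_congr rfl hsplit, Finset.sum_add_distrib, ← Finset.mul_sum]
    have h0 : c q (N+1) 0 * q^(0*(0-1)/2) * y^0 = c q N 0 * q^(0*(0-1)/2) * y^0 := by
      rw [c_zero_right, c_zero_right]
    rw [h0]
    rw [add_right_comm, ← hS]
    ring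

lemma exp_arith (m k : ℕ) :
    (((m+1)*m/2 : ℕ) : ℤ) + ((k*(k-1)/2 : ℕ) : ℤ) - (m : ℤ) * k
      = (((k:ℤ) - m) * (((k:ℤ) - m) - 1)) / 2 := by
  have hA : (((m+1)*m/2 : ℕ) : ℤ) * 2 = ((m:ℤ)+1) * m := by
    have he : Even ((m+1)*m) := by rw [mul_comm]; exact Nat.even_mul_succ_self m
    have : ((m+1)*m/2 : ℕ) * 2 = (m+1)*m := Nat.div_mul_cancel he.two_dvd
    exact_mod_cast congrArg (fun t : ℕ => (t : ℤ)) this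
  have hB : ((k*(k-1)/2 : ℕ) : ℤ) * 2 = (k:ℤ) * ((k:ℤ) - 1) := by
    rcases k with _ | k
    · simp
    · have he : Even ((k+1)*k) := by rw [mul_comm]; exact Nat.even_mul_succ_self k
      have h : ((k+1)*k/2 : ℕ) * 2 = (k+1)*k := Nat.div_mul_cancel he.two_dvd
      have h' : (((k+1)*k/2 : ℕ) : ℤ) * 2 = ((k:ℤ)+1) * k :=
        by exact_mod_cast congrArg (fun t : ℕ => (t : ℤ)) h
      simpa [Nat.add_sub_cancel] using h'
  set n : ℤ := (k:ℤ) - m with hn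
  have hev : Even (n * (n - 1)) := by
    have := Int.even_mul_succ_self (n - 1)
    simpa [mul_comm] using this
  obtain ⟨cc, hcc⟩ := hev
  have hdiv : n * (n - 1) / 2 = cc := by omega
  rw [hdiv]
  have hring : n * (n - 1) = (k:ℤ) * ((k:ℤ) - 1) + ((m:ℤ)+1) * m - 2 * ((m:ℤ) * k) := by
    rw [hn]; ring
  have h2 : (2:ℤ) * cc = n * (n-1) := by omega
  linarith [hA, hB, hring, h2]


lemma finite_jtp (q z : ℂ) (hq0 : q ≠ 0) (hz : z ≠ 0) (m : ℕ) :
    (∏ j ∈ Finset.range m, (1 - q ^ j * z)) * ∏ j ∈ Finset.range m, (1 - q ^ (j+1) / z)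
      = ∑ k ∈ Finset.range (2*m+1), c q (2*m) k *
          ((-1 : ℂ) ^ ((k:ℤ) - m) * q ^ ((((k:ℤ)-m) * (((k:ℤ)-m) - 1)) / 2) * z ^ ((k:ℤ)-m)) := by
  set x : ℂ := -z with hx
  have hx0 : x ≠ 0 := neg_ne_zero.mpr hz
  set y : ℂ := x * (q ^ m)⁻¹ with hy
  -- first product
  have h1 : (∏ j ∈ Finset.range m, (1 - q ^ j * z))
      = ∏ j ∈ Finset.range m, (1 + x * q ^ j) := by
    refine Finset.prod_congr rfl fun j _ => ?_
    rw [hx]; ring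
  -- second product, factored
  have h2 : (∏ j ∈ Finset.range m, (1 - q ^ (j+1) / z))
      = (∏ j ∈ Finset.range m, (q^(j+1) * x⁻¹)) *
        ∏ j ∈ Finset.range m, (1 + x * (q^(j+1))⁻¹) := by
    rw [← Finset.prod_mul_distrib]
    refine Finset.prod_congr rfl fun j _ => ?_
    have hqj : q ^ (j+1) ≠ 0 := pow_ne_zero _ hq0
    field_simp [hx]
    ring
  -- reflect the second factor
  have h2c : (∏ j ∈ Finset.range m, (1 + x * (q^(j+1))⁻¹))
      = ∏ j ∈ Finset.range m, (1 + x * (q^(m-j))⁻¹) := by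
    rw [← Finset.prod_range_reflect (fun j => 1 + x * (q^(j+1))⁻¹) m]
    refine Finset.prod_congr rfl fun j hj => ?_
    have hj' : j < m := Finset.mem_range.mp hj
    rw [show m - 1 - j + 1 = m - j from by omega]
  -- combine into one product of length 2m
  have hcomb : (∏ i ∈ Finset.range (2*m), (1 + y * q ^ i))
      = (∏ j ∈ Finset.range m, (1 + x * (q^(m-j))⁻¹)) *
        ∏ j ∈ Finset.range m, (1 + x * q ^ j) := by
    rw [two_mul, Finset.prod_range_add]
    congr 1
    · refine Finset.prod_congr rfl fun i hi => ?_
      have hi' : i < m := Finset.mem_range.mp hi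
      have hpow : q^(m-i) * q^i = q^m := by rw [← pow_add]; congr 1; omega
      have : y * q ^ i = x * (q^(m-i))⁻¹ := by
        rw [hy, mul_assoc]
        congr 1
        rw [← hpow, mul_inv, mul_assoc, inv_mul_cancel₀ (pow_ne_zero _ hq0), mul_one]
      rw [this]
    · refine Finset.prod_congr rfl fun i _ => ?_
      have : y * q ^ (m + i) = x * q ^ i := by
        rw [hy, pow_add, mul_assoc]
        congr 1
        rw [← mul_assoc, inv_mul_cancel₀ (pow_ne_zero _ hq0), one_mul]
      rw [this]
  -- evaluate the prefactor
  have hD : (∏ j ∈ Finset.range m, (q^(j+1) * x⁻¹))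
      = q ^ ((m+1)*m/2) * (x⁻¹) ^ m := by
    rw [Finset.prod_mul_distrib, Finset.prod_const, Finset.card_range, Finset.prod_pow_eq_pow_sum]
    congr 2
    have : ∑ j ∈ Finset.range (m+1), j = (∑ j ∈ Finset.range m, (j+1)) + 0 :=
      Finset.sum_range_succ' id m
    have hg : ∑ j ∈ Finset.range (m+1), j = (m+1)*((m+1)-1)/2 := Finset.sum_range_id (m+1)
    simp only [Nat.add_sub_cancel] at hg
    omega
  rw [h1, h2, h2c]
  have hre : (∏ j ∈ Finset.range m, (1 + x*q^j)) *
      ((∏ j ∈ Finset.range m, (q^(j+1)*x⁻¹)) * ∏ j ∈ Finset.range m, (1 + x*(q^(m-j))⁻¹))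
      = (∏ j ∈ Finset.range m, (q^(j+1)*x⁻¹)) *
        ((∏ j ∈ Finset.range m, (1 + x*(q^(m-j))⁻¹)) * (∏ j ∈ Finset.range m, (1 + x*q^j))) := by
    ring
  rw [hre, ← hcomb, qbinom q y (2*m), hD, Finset.mul_sum]
  refine Finset.sum_congr rfl fun k hk => ?_
  have hyk : y ^ k = x^k * (q^(m*k))⁻¹ := by rw [hy, mul_pow, inv_pow, ← pow_mul]
  have hxpart : x^k * (x⁻¹)^m = (-1 : ℂ)^((k:ℤ)-m) * z^((k:ℤ)-m) := by
    have hxx : x^k * (x⁻¹)^m = x ^ ((k:ℤ) - m) := by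
      calc x^k * (x⁻¹)^m = x^((k:ℤ)) * (x^((m:ℤ)))⁻¹ := by
            rw [zpow_natCast, zpow_natCast, inv_pow]
        _ = x^((k:ℤ)) * x^(-(m:ℤ)) := by rw [zpow_neg]
        _ = x^((k:ℤ) - m) := by rw [← zpow_add₀ hx0, sub_eq_add_neg]
    rw [hxx, hx, show -z = (-1 : ℂ) * z from by ring, mul_zpow]
  have hqpart : q^((m+1)*m/2) * (q^(k*(k-1)/2) * (q^(m*k))⁻¹)
      = q ^ ((((k:ℤ)-m) * (((k:ℤ)-m) - 1)) / 2) := by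
    rw [← zpow_natCast q ((m+1)*m/2), ← zpow_natCast q (k*(k-1)/2), ← zpow_natCast q (m*k),
      ← zpow_neg, ← zpow_add₀ hq0, ← zpow_add₀ hq0, ← exp_arith m k]
    congr 1
    push_cast
    ring
  calc q^((m+1)*m/2) * (x⁻¹)^m * (c q (2*m) k * q^(k*(k-1)/2) * y^k)
      = c q (2*m) k * ((x^k * (x⁻¹)^m) * (q^((m+1)*m/2) * (q^(k*(k-1)/2) * (q^(m*k))⁻¹))) := by
        rw [hyk]; ring
    _ = c q (2*m) k *
        ((-1 : ℂ)^((k:ℤ)-m) * q^((((k:ℤ)-m) * (((k:ℤ)-m) - 1)) / 2) * z^((k:ℤ)-m)) := by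
        rw [hxpart, hqpart]; ring

end JTP

/-- Partial products of `1 - f i` tend to the tprod, given summability of `f`. -/
lemma tendsto_prod_one_sub (f : ℕ → ℂ) (hf : Summable f) :
    Filter.Tendsto (fun m => ∏ i ∈ Finset.range m, (1 - f i)) atTop
      (nhds (∏' i : ℕ, (1 - f i))) := by
  have hprod : HasProd (fun i => 1 - f i) (∏' i : ℕ, (1 - f i)) := by
    by_cases h0 : ∃ i, 1 - f i = 0
    · obtain ⟨i0, hi0⟩ := h0
      have h : HasProd (fun i => 1 - f i) 0 := by
        have : Tendsto (fun s : Finset ℕ => ∏ i ∈ s, (1 - f i)) atTop (nhds 0) := by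
          apply Tendsto.congr' _ (tendsto_const_nhds :
            Tendsto (fun _ : Finset ℕ => (0:ℂ)) atTop (nhds 0))
          filter_upwards [eventually_ge_atTop ({i0} : Finset ℕ)] with s hs
          exact (Finset.prod_eq_zero (hs (Finset.mem_singleton_self i0)) hi0).symm
        exact this
      rw [h.tprod_eq]; exact h
    · push_neg at h0
      have hlog : Summable fun i => Complex.log (1 - f i) := by
        have hf0 : Tendsto f atTop (nhds 0) := hf.tendsto_atTop_zero
        have hev : ∀ᶠ i in atTop, ‖Complex.log (1 - f i)‖ ≤ (3/2) * ‖f i‖ := by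
          filter_upwards [hf0.eventually (Metric.ball_mem_nhds 0 (by norm_num : (0:ℝ) < 1/2))]
            with i hi
          have : ‖-f i‖ ≤ 1/2 := by
            simpa [norm_neg] using (le_of_lt (by simpa [dist_eq_norm] using hi))
          simpa [sub_eq_add_neg] using Complex.norm_log_one_add_half_le_self this
        apply Summable.of_norm_bounded_eventually_nat (g := fun i => (3/2) * ‖f i‖)
          (hf.norm.mul_left _)
        simpa using hev
      exact (Complex.multipliable_of_summable_log hlog).hasProd
  exact hprod.tendsto_prod_nat





namespace JTP

lemma summable_ratio_aux (u : ℕ → ℝ) (hpos : ∀ n, 0 < u n) (c : ℕ → ℝ)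
    (hc : Filter.Tendsto c atTop (nhds 0)) (hrec : ∀ n, u (n+1) = c n * u n) :
    Summable u := by
  apply summable_of_ratio_norm_eventually_le (r := 1/2) (by norm_num)
  have habs : Filter.Tendsto (fun n => |c n|) atTop (nhds 0) := by
    have := hc.abs; simpa using this
  filter_upwards [habs.eventually_lt_const (by norm_num : (0:ℝ) < 1/2)] with n hn
  rw [hrec n, Real.norm_eq_abs, Real.norm_eq_abs, abs_mul]
  have := (hpos n).le
  calc |c n| * |u n| ≤ 1/2 * |u n| :=
    mul_le_mul_of_nonneg_right hn.le (abs_nonneg _)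
    _ = 1/2 * ‖u n‖ := by rw [Real.norm_eq_abs]

lemma summable_int_aux {r s : ℝ} (hr0 : 0 < r) (hr1 : r < 1) (hs : 0 < s) :
    Summable (fun n : ℤ => r ^ (n*(n-1)/2) * s ^ n) := by
  have hupos : ∀ k : ℤ, 0 < r ^ (k*(k-1)/2) * s ^ k := fun k =>
    mul_pos (zpow_pos hr0 _) (zpow_pos hs _)
  apply Summable.of_nat_of_neg
  · apply summable_ratio_aux _ (fun n => hupos n) (fun n => r ^ n * s)
    · simpa using
        (tendsto_pow_atTop_nhds_zero_of_lt_one hr0.le hr1).mul_const s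
    · intro n
      have he : ((n:ℤ)+1)*(((n:ℤ)+1)-1)/2 = (n:ℤ)*((n:ℤ)-1)/2 + n := by
        have h : ((n:ℤ)+1)*(((n:ℤ)+1)-1) = (n:ℤ)*((n:ℤ)-1) + 2*n := by ring
        omega
      push_cast
      rw [he, zpow_add₀ hr0.ne', zpow_add_one₀ hs.ne', zpow_natCast]
      ring
  · apply summable_ratio_aux _ (fun n => hupos (-n)) (fun n => r ^ (n+1) * s⁻¹)
    · have : Filter.Tendsto (fun n : ℕ => r ^ (n+1)) atTop (nhds 0) := by
        have := (tendsto_pow_atTop_nhds_zero_of_lt_one hr0.le hr1).comp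
          (tendsto_add_atTop_nat 1)
        exact this
      simpa using this.mul_const s⁻¹
    · intro n
      have he : (-((n:ℤ)+1))*((-((n:ℤ)+1))-1)/2 = (-(n:ℤ))*((-(n:ℤ))-1)/2 + (n+1) := by
        have h : (-((n:ℤ)+1))*((-((n:ℤ)+1))-1) = (-(n:ℤ))*((-(n:ℤ))-1) + 2*(n+1) := by ring
        omega
      push_cast
      rw [he, zpow_add₀ hr0.ne', show (-((n:ℤ)+1)) = (-(n:ℤ)) + (-1) from by ring,
        zpow_add₀ hs.ne']
      rw [zpow_neg_one, show ((n:ℤ)+1) = ((n+1 : ℕ) : ℤ) from by push_cast; ring,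
        zpow_natCast]
      ring

end JTP

/-- extended Gaussian binomial indexed over ℤ -/
noncomputable def JTP.cx (q : ℂ) (m : ℕ) (n : ℤ) : ℂ :=
  if n.natAbs ≤ m then JTP.c q (2*m) (n + m).toNat else 0


/-- Infinite q-Pochhammer symbol `(x;q)_∞ = ∏_{i ≥ 0} (1 - qⁱ x)`. -/
noncomputable def qPoch (x q : ℂ) : ℂ := ∏' i : ℕ, (1 - q ^ i * x)

/-- Theta function `j(z;q) = (z;q)_∞ (q/z;q)_∞ (q;q)_∞`. -/
noncomputable def jtheta (z q : ℂ) : ℂ := qPoch z q * qPoch (q / z) q * qPoch q q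

open JTP

/-- Jacobi triple product identity. -/
theorem jacobi_triple_product (q z : ℂ) (hq : ‖q‖ < 1) (hz : z ≠ 0) :
    qPoch z q * qPoch (q / z) q * qPoch q q
      = ∑' n : ℤ, (-1 : ℂ) ^ n * q ^ (n * (n - 1) / 2) * z ^ n := by
  by_cases hq0 : q = 0
  · subst hq0
    have h1 : qPoch z 0 = 1 - z := by
      rw [qPoch, tprod_eq_prod (s := ({0} : Finset ℕ))
        (fun i hi => by
          have : i ≠ 0 := by simpa using hi
          simp [zero_pow this])]
      simp
    have h2 : qPoch (0/z) 0 = 1 := by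
      rw [qPoch, tprod_eq_prod (s := (∅ : Finset ℕ)) (fun i _ => by simp)]
      simp
    have h3 : qPoch 0 0 = 1 := by
      rw [qPoch, tprod_eq_prod (s := (∅ : Finset ℕ)) (fun i _ => by simp)]
      simp
    have h4 : (∑' n : ℤ, (-1 : ℂ) ^ n * (0:ℂ) ^ (n * (n - 1) / 2) * z ^ n) = 1 - z := by
      rw [tsum_eq_sum (s := ({0, 1} : Finset ℤ)) (fun n hn => ?_)]
      · rw [Finset.sum_pair (by norm_num : (0:ℤ) ≠ 1)]
        norm_num
        ring
      · have hn0 : n ≠ 0 := fun h => hn (by simp [h])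
        have hn1 : n ≠ 1 := fun h => hn (by simp [h])
        have h2' : (2:ℤ) ≤ n*(n-1) := by
          rcases lt_or_ge n 0 with h | h
          · nlinarith
          · have : 2 ≤ n := by omega
            nlinarith
        have he : n * (n-1) / 2 ≠ 0 := by omega
        rw [zero_zpow _ he]
        ring
    rw [h1, h2, h3, h4]; ring
  · -- main case : q ≠ 0
    have hr0 : 0 < ‖q‖ := norm_pos_iff.mpr hq0
    have hs0 : 0 < ‖z‖ := norm_pos_iff.mpr hz
    obtain ⟨δ, C, hδ, hC, hPb⟩ := P_norm_bounds hq
    have hPnz : ∀ m, P q m ≠ 0 := by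
      intro m h
      have h1 := (hPb m).1
      rw [h] at h1; simp at h1; linarith
    have hsumq : ∀ w : ℂ, Summable (fun i : ℕ => q^i * w) := fun w =>
      (summable_geometric_of_norm_lt_one (by exact hq)).mul_right w
    have hPlim : Filter.Tendsto (fun m => P q m) atTop (nhds (qPoch q q)) := by
      have h := tendsto_prod_one_sub (fun i => q^i * q) (hsumq q)
      have hfun : ∀ m, (∏ i ∈ Finset.range m, (1 - q^i * q)) = P q m := fun m =>
        Finset.prod_congr rfl fun j _ => by rw [pow_succ]
      rw [qPoch]
      exact Filter.Tendsto.congr hfun h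
    have hLqabs : δ ≤ ‖qPoch q q‖ := by
      have habs : Filter.Tendsto (fun m => ‖P q m‖) atTop
          (nhds (‖qPoch q q‖)) :=
        (continuous_norm.tendsto _).comp hPlim
      exact ge_of_tendsto' habs (fun m => (hPb m).1)
    have hLqnz : qPoch q q ≠ 0 := by
      intro h
      rw [h] at hLqabs; simp at hLqabs; linarith
    -- limit of Gaussian binomials
    have hclim : ∀ n : ℤ, Filter.Tendsto (fun m => cx q m n) atTop (nhds (qPoch q q)⁻¹) := by
      intro n
      have h2m : Filter.Tendsto (fun m : ℕ => P q (2*m)) atTop (nhds (qPoch q q)) :=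
        hPlim.comp (Filter.tendsto_atTop_atTop.mpr fun b => ⟨b, fun a ha => by omega⟩)
      have hup : Filter.Tendsto (fun m : ℕ => P q ((n + m).toNat)) atTop (nhds (qPoch q q)) :=
        hPlim.comp (Filter.tendsto_atTop_atTop.mpr fun b =>
          ⟨b + n.natAbs, fun a ha => by omega⟩)
      have hdn : Filter.Tendsto (fun m : ℕ => P q (2*m - (n + m).toNat)) atTop
          (nhds (qPoch q q)) :=
        hPlim.comp (Filter.tendsto_atTop_atTop.mpr fun b =>
          ⟨b + n.natAbs, fun a ha => by omega⟩)
      have hcomb := (h2m.mul (hup.inv₀ hLqnz)).mul (hdn.inv₀ hLqnz)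
      rw [show qPoch q q * (qPoch q q)⁻¹ * (qPoch q q)⁻¹ = (qPoch q q)⁻¹ from by
        field_simp] at hcomb
      refine hcomb.congr' ?_
      filter_upwards [Filter.eventually_ge_atTop n.natAbs] with m hm
      have hk : (n + m).toNat ≤ 2*m := by omega
      have h := c_mul q (2*m) ((n+m).toNat) hk
      rw [cx, if_pos (by omega : n.natAbs ≤ m)]
      field_simp [hPnz ((n + (m:ℤ)).toNat), hPnz (2*m - (n + (m:ℤ)).toNat)]
      linear_combination h.symm
    -- the finite identity as a tsum
    have hFin : ∀ m : ℕ,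
        (∏ j ∈ Finset.range m, (1 - q^j * z)) * ∏ j ∈ Finset.range m, (1 - q^(j+1)/z)
          = ∑' n : ℤ, cx q m n *
              ((-1 : ℂ) ^ n * q ^ (n * (n - 1) / 2) * z ^ n) := by
      intro m
      rw [finite_jtp q z hq0 hz m]
      have hinj : Function.Injective (fun k : ℕ => (k:ℤ) - m) := fun a b h => by
        simp only at h; omega
      rw [tsum_eq_sum
        (s := (Finset.range (2*m+1)).map ⟨fun k : ℕ => (k:ℤ) - m, hinj⟩)
        (fun n hn => ?_)]
      · rw [Finset.sum_map]
        refine Finset.sum_congr rfl fun k hk => ?_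
        have hk' : k ≤ 2*m := by
          have := Finset.mem_range.mp hk; omega
        simp only [Function.Embedding.coeFn_mk]
        rw [cx, if_pos (by omega : ((k:ℤ) - m).natAbs ≤ m)]
        congr 2
        omega
      · have hguard : ¬ (n.natAbs ≤ m) := by
          intro hnm
          apply hn
          simp only [Finset.mem_map, Finset.mem_range, Function.Embedding.coeFn_mk]
          exact ⟨(n+m).toNat, by omega, by omega⟩
        rw [cx, if_neg hguard, zero_mul]
    -- dominated convergence
    have hbound_sum : Summable (fun n : ℤ =>
        (C/δ^2) * (‖q‖ ^ (n*(n-1)/2) * ‖z‖ ^ n)) :=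
      (summable_int_aux hr0 hq hs0).mul_left _
    have hgn : ∀ n : ℤ, ‖(-1 : ℂ) ^ n * q ^ (n * (n - 1) / 2) * z ^ n‖
        = ‖q‖ ^ (n*(n-1)/2) * ‖z‖ ^ n := by
      intro n
      rw [norm_mul, norm_mul, norm_zpow, norm_zpow, norm_zpow]
      simp
    have hcxb : ∀ m (n : ℤ), ‖cx q m n‖ ≤ C/δ^2 := by
      intro m n
      rw [cx]
      split
      · next hguard =>
        have hk : (n + m).toNat ≤ 2*m := by omega
        have h := congrArg norm (c_mul q (2*m) ((n+m).toNat) hk)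
        rw [norm_mul, norm_mul] at h
        have h1 := (hPb ((n+m).toNat)).1
        have h2 := (hPb (2*m - (n+m).toNat)).1
        have h3 := (hPb (2*m)).2
        have hnn : 0 ≤ ‖c q (2*m) ((n+m).toNat)‖ := norm_nonneg _
        rw [le_div_iff₀ (by positivity : (0:ℝ) < δ^2)]
        have hAB : δ^2 ≤ ‖P q ((n+(m:ℤ)).toNat)‖ *
            ‖P q (2*m - (n+(m:ℤ)).toNat)‖ := by nlinarith
        nlinarith [mul_le_mul_of_nonneg_left hAB hnn]
      · simp
        positivity
    have hdom : Filter.Tendsto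
        (fun m => ∑' n : ℤ, cx q m n * ((-1 : ℂ) ^ n * q ^ (n * (n - 1) / 2) * z ^ n))
        atTop
        (nhds (∑' n : ℤ, (qPoch q q)⁻¹ * ((-1 : ℂ) ^ n * q ^ (n * (n - 1) / 2) * z ^ n))) := by
      refine tendsto_tsum_of_dominated_convergence hbound_sum
        (fun n => (hclim n).mul_const _) (Filter.Eventually.of_forall fun m n => ?_)
      rw [norm_mul, hgn n]
      exact mul_le_mul_of_nonneg_right (hcxb m n) (by positivity)
    -- product side
    have hA : Filter.Tendsto (fun m => ∏ j ∈ Finset.range m, (1 - q^j * z)) atTop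
        (nhds (qPoch z q)) := by
      have h := tendsto_prod_one_sub (fun i => q^i * z) (hsumq z)
      rw [qPoch]; exact h
    have hB : Filter.Tendsto (fun m => ∏ j ∈ Finset.range m, (1 - q^(j+1)/z)) atTop
        (nhds (qPoch (q/z) q)) := by
      have h := tendsto_prod_one_sub (fun i => q^i * (q/z)) (hsumq (q/z))
      rw [qPoch]
      refine Filter.Tendsto.congr (fun m => Finset.prod_congr rfl fun j _ => ?_) h
      rw [pow_succ]; ring
    have hprod := hA.mul hB
    rw [show (fun m => (∏ j ∈ Finset.range m, (1 - q^j * z)) *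
        ∏ j ∈ Finset.range m, (1 - q^(j+1)/z))
      = fun m => ∑' n : ℤ, cx q m n * ((-1 : ℂ) ^ n * q ^ (n * (n - 1) / 2) * z ^ n)
      from funext hFin] at hprod
    have huniq := tendsto_nhds_unique hprod hdom
    rw [tsum_mul_left] at huniq
    rw [huniq, mul_comm, ← mul_assoc, mul_inv_cancel₀ hLqnz, one_mul]
end

section
/- Inversion symmetry of the Appell function: for |q| < 1 and generic x, z ∈ ℂ*, m(x, z; q) = x^{-1} m(x^{-1}, z^{-1}; q). -/
open scoped BigOperators
open Complex

/-- Appell function `m(x,z;q)`. -/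
noncomputable def appell (x z q : ℂ) : ℂ :=
  (jtheta z q)⁻¹ *
    ∑' n : ℤ, ((-1 : ℂ) ^ n * q ^ (n * (n - 1) / 2) * z ^ n) / (1 - q ^ (n - 1) * x * z)

private lemma multipliable_qPoch_aux (q w : ℂ) (hq : ‖q‖ < 1)
    (h : ∀ i : ℕ, 1 - q ^ i * w ≠ 0) :
    Multipliable (fun i : ℕ => 1 - q ^ i * w) := by
  have hql : ‖q‖ < 1 := by exact hq
  refine Complex.multipliable_of_summable_log ?_
  have hgeo : Summable (fun n : ℕ => (3/2 : ℝ) * (‖q‖ ^ n * ‖w‖)) :=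
    ((summable_geometric_of_lt_one (norm_nonneg q) hql).mul_right ‖w‖).mul_left _
  refine Summable.of_norm_bounded_eventually_nat hgeo ?_
  have htend : Filter.Tendsto (fun n : ℕ => ‖q‖ ^ n * ‖w‖) Filter.atTop (nhds 0) := by
    simpa using (tendsto_pow_atTop_nhds_zero_of_lt_one (norm_nonneg q) hql).mul_const ‖w‖
  filter_upwards [htend.eventually (eventually_le_nhds (by norm_num : (0:ℝ) < 1/2))] with n hn
  have hnorm : ‖-(q ^ n * w)‖ ≤ 1/2 := by rwa [norm_neg, norm_mul, norm_pow]
  have hlog := Complex.norm_log_one_add_half_le_self hnorm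
  rw [show (1 : ℂ) + -(q ^ n * w) = 1 - q ^ n * w by ring] at hlog
  calc ‖Complex.log (1 - q ^ n * w)‖ ≤ 3/2 * ‖-(q ^ n * w)‖ := hlog
    _ = 3/2 * (‖q‖ ^ n * ‖w‖) := by rw [norm_neg, norm_mul, norm_pow]

private lemma qPoch_split (q w : ℂ) (hq : ‖q‖ < 1)
    (h : ∀ i : ℕ, 1 - q ^ i * (q * w) ≠ 0) :
    qPoch w q = (1 - w) * qPoch (q * w) q := by
  have hm := multipliable_qPoch_aux q (q * w) hq h
  have hm' : Multipliable (fun i : ℕ => 1 - q ^ (i + 1) * w) := by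
    refine hm.congr fun b => ?_
    rw [pow_succ, mul_assoc]
  have h0 := tprod_eq_zero_mul' (f := fun i : ℕ => 1 - q ^ i * w) hm'
  simp only [pow_zero, one_mul] at h0
  unfold qPoch
  rw [h0]
  congr 1
  exact tprod_congr fun b => by rw [pow_succ, mul_assoc]

private lemma jtheta_inv_eq (q z : ℂ) (hq : ‖q‖ < 1) (hq0 : q ≠ 0) (hz : z ≠ 0)
    (hzgen : ∀ n : ℤ, z ≠ q ^ n) :
    jtheta z⁻¹ q = -z⁻¹ * jtheta z q := by
  have h1 : ∀ i : ℕ, 1 - q ^ i * z⁻¹ ≠ 0 := by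
    intro i hi
    have h1' : q ^ i * z⁻¹ = 1 := (sub_eq_zero.mp hi).symm
    have : q ^ i = z := (mul_inv_eq_one₀ hz).mp h1'
    exact hzgen i (by rw [zpow_natCast]; exact this.symm)
  have h2 : ∀ i : ℕ, 1 - q ^ i * z ≠ 0 := by
    intro i hi
    have h1' : q ^ i * z = 1 := (sub_eq_zero.mp hi).symm
    have : z = (q ^ i)⁻¹ := eq_inv_of_mul_eq_one_right h1'
    exact hzgen (-i) (by rw [zpow_neg, zpow_natCast]; exact this)
  have e1 := qPoch_split q z⁻¹ hq (fun i => by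
    simpa [pow_succ, mul_assoc] using h1 (i + 1))
  have e2 := qPoch_split q z hq (fun i => by
    simpa [pow_succ, mul_assoc] using h2 (i + 1))
  unfold jtheta
  rw [show q / z⁻¹ = q * z by field_simp, show q / z = q * z⁻¹ from div_eq_mul_inv q z, e1, e2]
  have hzz : (1 : ℂ) - z⁻¹ = -z⁻¹ * (1 - z) := by field_simp; ring
  rw [hzz]; ring

/-- `m(x, z; q) = x⁻¹ m(x⁻¹, z⁻¹; q)`. -/
theorem appell_inv (q x z : ℂ) (hq : ‖q‖ < 1) (hq0 : q ≠ 0)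
    (hx : x ≠ 0) (hz : z ≠ 0)
    (hzgen : ∀ n : ℤ, z ≠ q ^ n) (hxzgen : ∀ n : ℤ, x * z ≠ q ^ n) :
    appell x z q = x⁻¹ * appell x⁻¹ z⁻¹ q := by
  have hm1 : (-1 : ℂ) ≠ 0 := by norm_num
  have hinv_neg_one : ∀ n : ℤ, ((-1 : ℂ) ^ n)⁻¹ = (-1 : ℂ) ^ n := by
    intro n; rw [← inv_zpow, inv_neg, inv_one]
  have key : ∀ n : ℤ,
      ((-1 : ℂ) ^ (1 - n) * q ^ ((1 - n) * (1 - n - 1) / 2) * (z⁻¹) ^ (1 - n)) /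
          (1 - q ^ (1 - n - 1) * x⁻¹ * z⁻¹) =
        (-(x * z⁻¹)) * (((-1 : ℂ) ^ (n + 1) * q ^ ((n + 1) * (n + 1 - 1) / 2) * z ^ (n + 1)) /
          (1 - q ^ (n + 1 - 1) * x * z)) := by
    intro n
    have hd2 : (1 : ℂ) - q ^ n * x * z ≠ 0 := by
      intro h
      have h1 : q ^ n * (x * z) = 1 := by rw [← mul_assoc]; exact (sub_eq_zero.mp h).symm
      exact hxzgen (-n) (by rw [zpow_neg]; exact eq_inv_of_mul_eq_one_right h1)
    have hd1 : (1 : ℂ) - (q ^ n)⁻¹ * x⁻¹ * z⁻¹ ≠ 0 := by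
      intro h
      have h1 : (q ^ n)⁻¹ * (x * z)⁻¹ = 1 := by
        rw [mul_inv]; rw [← mul_assoc]; exact (sub_eq_zero.mp h).symm
      have h2 : (q ^ n)⁻¹ = x * z := (mul_inv_eq_one₀ (mul_ne_zero hx hz)).mp h1
      exact hxzgen (-n) (by rw [zpow_neg]; exact h2.symm)
    have hd3 : q ^ n * x * z ^ 2 - z ≠ 0 := by
      intro h
      apply hd2
      have hzz : z * (1 - q ^ n * x * z) = 0 := by linear_combination -h
      rcases mul_eq_zero.mp hzz with h' | h'
      · exact absurd h' hz
      · exact h'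
    have ea : ((1 : ℤ) - n) * (1 - n - 1) / 2 = n * (n - 1) / 2 := by
      rw [show ((1 : ℤ) - n) * (1 - n - 1) = n * (n - 1) by ring]
    have eb : (1 : ℤ) - n - 1 = -n := by ring
    have ec : ((n : ℤ) + 1) * (n + 1 - 1) / 2 = n * (n - 1) / 2 + n := by
      rw [show ((n : ℤ) + 1) * (n + 1 - 1) = n * (n - 1) + n * 2 by ring,
        Int.add_mul_ediv_right _ _ two_ne_zero]
    have ed : (n : ℤ) + 1 - 1 = n := by ring
    rw [ea, eb, ec, ed]
    have hneg : (-1 : ℂ) ^ (1 - n) = -((-1 : ℂ) ^ n) := by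
      rw [zpow_sub₀ hm1, zpow_one, div_eq_mul_inv, hinv_neg_one, neg_one_mul]
    rw [hneg, zpow_add₀ hm1, zpow_one, zpow_add₀ hq0, zpow_add₀ hz, zpow_one,
      inv_zpow, zpow_sub₀ hz, zpow_one, zpow_neg]
    have hqn : (q : ℂ) ^ n ≠ 0 := zpow_ne_zero n hq0
    have hzn : (z : ℂ) ^ n ≠ 0 := zpow_ne_zero n hz
    have hs : ((-1 : ℂ) ^ n) ≠ 0 := zpow_ne_zero n hm1
    field_simp
    have hDD : (q ^ n * x * z ^ 2 - z) * (q ^ n * x * z ^ 2 - z)⁻¹ = 1 := mul_inv_cancel₀ hd3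
    rw [← one_div_neg_eq_neg_one_div, neg_sub]
  have hsum : (∑' n : ℤ, ((-1 : ℂ) ^ n * q ^ (n * (n - 1) / 2) * (z⁻¹) ^ n) /
        (1 - q ^ (n - 1) * x⁻¹ * z⁻¹)) =
      (-(x * z⁻¹)) * ∑' n : ℤ, ((-1 : ℂ) ^ n * q ^ (n * (n - 1) / 2) * z ^ n) /
        (1 - q ^ (n - 1) * x * z) := by
    rw [← (Equiv.subLeft (1 : ℤ)).tsum_eq (fun n : ℤ =>
      ((-1 : ℂ) ^ n * q ^ (n * (n - 1) / 2) * (z⁻¹) ^ n) / (1 - q ^ (n - 1) * x⁻¹ * z⁻¹))]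
    rw [← (Equiv.addRight (1 : ℤ)).tsum_eq (fun n : ℤ =>
      ((-1 : ℂ) ^ n * q ^ (n * (n - 1) / 2) * z ^ n) / (1 - q ^ (n - 1) * x * z))]
    rw [← tsum_mul_left]
    refine tsum_congr fun n => ?_
    simpa using key n
  unfold appell
  rw [jtheta_inv_eq q z hq hq0 hz hzgen, hsum]
  set J := jtheta z q
  set S := ∑' n : ℤ, ((-1 : ℂ) ^ n * q ^ (n * (n - 1) / 2) * z ^ n) / (1 - q ^ (n - 1) * x * z)
  calc J⁻¹ * S = (x⁻¹ * x) * (z⁻¹ * z) * (J⁻¹ * S) := by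
        rw [inv_mul_cancel₀ hx, inv_mul_cancel₀ hz]; ring
    _ = x⁻¹ * ((-z⁻¹ * J)⁻¹ * (-(x * z⁻¹) * S)) := by
        rw [mul_inv, inv_neg, inv_inv]; ring
end

section
/- Shift in the first argument of the Appell function: for |q| < 1 and generic x, z ∈ ℂ*, m(qx, z; q) = 1 - x · m(x, z; q). -/
open scoped BigOperators
open Complex
open Filter Finset
open scoped Topology

section part1
variable {q : ℂ}

lemma qp_summable_log (hq : ‖q‖ < 1) (w : ℂ) :
    Summable (fun i : ℕ => Complex.log (1 - q ^ i * w)) := by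
  have hsum : Summable (fun i : ℕ => ‖q ^ i * w‖) := by
    simpa [norm_mul, norm_pow] using
      (summable_geometric_of_lt_one (norm_nonneg q) hq).mul_right ‖w‖
  have htend : Tendsto (fun i : ℕ => ‖q ^ i * w‖) atTop (𝓝 0) := hsum.tendsto_atTop_zero
  have hev : ∀ᶠ i in atTop, ‖q ^ i * w‖ ≤ 1/2 := htend.eventually_le_const (by norm_num)
  apply Summable.of_norm_bounded_eventually_nat (g := fun i => 3/2 * ‖q ^ i * w‖)
    (hsum.mul_left _)
  filter_upwards [hev] with i hi
  have := Complex.norm_log_one_add_half_le_self (z := -(q ^ i * w)) (by simpa using hi)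
  simpa [sub_eq_add_neg] using this

lemma qp_hasProd (hq : ‖q‖ < 1) {w : ℂ} (h0 : ∀ i : ℕ, 1 - q ^ i * w ≠ 0) :
    HasProd (fun i : ℕ => 1 - q ^ i * w) (qPoch w q) := by
  have := Complex.multipliable_of_summable_log (qp_summable_log hq w)
  exact this.hasProd

lemma qp_ne_zero (hq : ‖q‖ < 1) {w : ℂ} (h0 : ∀ i : ℕ, 1 - q ^ i * w ≠ 0) :
    qPoch w q ≠ 0 := by
  have := Complex.cexp_tsum_eq_tprod (fun i => h0 i) (qp_summable_log hq w)
  rw [qPoch, ← this]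
  exact Complex.exp_ne_zero _

lemma qp_tendsto (hq : ‖q‖ < 1) {w : ℂ} (h0 : ∀ i : ℕ, 1 - q ^ i * w ≠ 0) :
    Tendsto (fun N => ∏ i ∈ Finset.range N, (1 - q ^ i * w)) atTop (𝓝 (qPoch w q)) :=
  (qp_hasProd hq h0).tendsto_prod_nat

end part1

section part2
variable {q : ℂ}

noncomputable def pq (q : ℂ) (k : ℕ) : ℂ := ∏ i ∈ Finset.range k, (1 - q ^ i * q)

noncomputable def gb (q : ℂ) (M k : ℕ) : ℂ := pq q M / (pq q k * pq q (M - k))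

lemma tri (n : ℕ) : (n + 1) * n / 2 = n * (n - 1) / 2 + n := by
  rcases n with _ | r
  · rfl
  · have h : (r + 1 + 1) * (r + 1) = (r + 1) * r + 2 * (r + 1) := by ring
    rw [h, Nat.add_mul_div_left _ _ (by norm_num : 0 < 2)]
    simp

lemma one_sub_pow_ne (hq : ‖q‖ < 1) (i : ℕ) : 1 - q ^ i * q ≠ 0 := by
  intro h
  have h1 : q ^ i * q = 1 := by linear_combination -h
  have : ‖q ^ i * q‖ < 1 := by
    rw [norm_mul, norm_pow]
    calc ‖q‖ ^ i * ‖q‖ ≤ 1 * ‖q‖ := by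
          apply mul_le_mul_of_nonneg_right _ (norm_nonneg _)
          exact pow_le_one₀ (norm_nonneg _) hq.le
      _ < 1 := by simpa
  rw [h1] at this; simp at this

lemma pq_ne_zero (hq : ‖q‖ < 1) (k : ℕ) : pq q k ≠ 0 :=
  Finset.prod_ne_zero_iff.2 fun i _ => one_sub_pow_ne hq i

lemma pq_succ (k : ℕ) : pq q (k + 1) = pq q k * (1 - q ^ k * q) := Finset.prod_range_succ _ _

lemma pq_zero : pq q 0 = 1 := by simp [pq]

lemma gb_zero (M : ℕ) (hq : ‖q‖ < 1) : gb q M 0 = 1 := by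
  rw [gb, pq_zero, one_mul, Nat.sub_zero]
  exact div_self (pq_ne_zero hq M)

lemma gb_self (M : ℕ) (hq : ‖q‖ < 1) : gb q M M = 1 := by
  rw [gb, Nat.sub_self, pq_zero, mul_one]
  exact div_self (pq_ne_zero hq M)

/-- Gauss's q-binomial theorem (finite form). -/
lemma gauss (hq : ‖q‖ < 1) : ∀ (M : ℕ) (t : ℂ),
    ∏ i ∈ Finset.range M, (1 + q ^ i * t)
      = ∑ k ∈ Finset.range (M + 1), gb q M k * q ^ (k * (k - 1) / 2) * t ^ k := by
  intro M
  induction M with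
  | zero => intro t; simp [gb_zero 0 hq]
  | succ M ih =>
    intro t
    rw [Finset.prod_range_succ, ih t]
    set S := ∑ k ∈ Finset.range (M + 1), gb q M k * q ^ (k * (k - 1) / 2) * t ^ k with hS
    have key : ∀ k ∈ Finset.range (M + 2),
        gb q (M + 1) k * q ^ (k * (k - 1) / 2) * t ^ k
          = (if k ≤ M then gb q M k * q ^ (k * (k - 1) / 2) * t ^ k else 0)
            + (if 1 ≤ k then gb q M (k - 1) * q ^ ((k - 1) * (k - 2) / 2 + M) * t ^ k else 0) := by
      intro k hk
      rw [Finset.mem_range] at hk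
      rcases Nat.eq_zero_or_pos k with rfl | hk1
      · simp [gb_zero _ hq]
      obtain ⟨m, rfl⟩ : ∃ m, k = m + 1 := ⟨k - 1, by omega⟩
      rcases Nat.lt_or_ge (m + 1) (M + 1) with hkM | hkM
      · -- 1 ≤ k ≤ M : main case
        obtain ⟨r, rfl⟩ : ∃ r, M = m + 1 + r := ⟨M - (m + 1), by omega⟩
        rw [if_pos (by omega), if_pos (by omega)]
        simp only [Nat.add_sub_cancel]
        have e1 : m + 1 + r + 1 - (m + 1) = r + 1 := by omega
        have e2 : m + 1 + r - (m + 1) = r := by omega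
        have e3 : m + 1 + r - m = r + 1 := by omega
        rw [gb, gb, gb, e1, e2, e3]
        have p1 : pq q (m + 1 + r + 1) = pq q (m + 1 + r) * (1 - q ^ (m + 1 + r) * q) :=
          pq_succ _
        have p2 : pq q (m + 1) = pq q m * (1 - q ^ m * q) := pq_succ _
        have p3 : pq q (r + 1) = pq q r * (1 - q ^ r * q) := pq_succ _
        have htri : q ^ ((m + 1) * m / 2) = q ^ (m * (m - 1) / 2) * q ^ m := by
          rw [← pow_add, tri]
        have hMq : q ^ (m + 1 + r) = q ^ m * q * q ^ r := by
          rw [← pow_succ, ← pow_add]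
        have hexp : q ^ (m * (m - 1) / 2 + (m + 1 + r))
            = q ^ (m * (m - 1) / 2) * (q ^ m * q * q ^ r) := by
          rw [pow_add, hMq]
        rw [p1, hMq, p2, p3, htri]
        simp only [show m + 1 - 2 = m - 1 from by omega]
        rw [hexp]
        have nA := pq_ne_zero hq m
        have nB := pq_ne_zero hq r
        have nP := pq_ne_zero hq (m + 1 + r)
        have n1 : 1 - q ^ m * q ≠ 0 := one_sub_pow_ne hq _
        have n2 : 1 - q ^ r * q ≠ 0 := one_sub_pow_ne hq _
        have n1' : 1 - q * q ^ m ≠ 0 := by rw [mul_comm]; exact n1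
        have n2' : 1 - q * q ^ r ≠ 0 := by rw [mul_comm]; exact n2
        field_simp
        ring
      · -- k = M + 1
        have hk' : m = M := by omega
        subst hk'
        rw [if_neg (by omega), if_pos (by omega), zero_add]
        simp only [Nat.add_sub_cancel]
        rw [gb_self _ hq, gb_self _ hq]
        simp only [show m + 1 - 2 = m - 1 from by omega]
        rw [tri]
    rw [Finset.sum_congr rfl key, Finset.sum_add_distrib]
    have h1 : (∑ k ∈ Finset.range (M + 2),
        if k ≤ M then gb q M k * q ^ (k * (k - 1) / 2) * t ^ k else 0) = S := by
      rw [Finset.sum_range_succ, if_neg (by omega), add_zero, hS]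
      exact Finset.sum_congr rfl fun k hk => by
        rw [Finset.mem_range] at hk; rw [if_pos (by omega)]
    have h2 : (∑ k ∈ Finset.range (M + 2),
        if 1 ≤ k then gb q M (k - 1) * q ^ ((k - 1) * (k - 2) / 2 + M) * t ^ k else 0)
        = q ^ M * t * S := by
      rw [Finset.sum_range_succ']
      rw [if_neg (by omega), add_zero, hS, Finset.mul_sum]
      apply Finset.sum_congr rfl
      intro k hk
      rw [if_pos (by omega)]
      have e1 : k + 1 - 1 = k := by omega
      have e2 : k + 1 - 2 = k - 1 := by omega
      rw [e1, e2, pow_add, pow_succ]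
      ring
    rw [h1, h2]; ring
end part2

noncomputable def tt (z q : ℂ) (n : ℤ) : ℂ := (-1 : ℂ) ^ n * q ^ (n * (n - 1) / 2) * z ^ n

section part3
variable {q z : ℂ}

lemma half_eq {u a : ℤ} (h : u = 2 * a) : u / 2 = a := by
  rw [h]; exact Int.mul_ediv_cancel_left a two_ne_zero

lemma castTri (k : ℕ) : ((k * (k - 1) / 2 : ℕ) : ℤ) = (k : ℤ) * ((k : ℤ) - 1) / 2 := by
  rcases Nat.eq_zero_or_pos k with rfl | hk
  · simp
  obtain ⟨c, hc⟩ : ∃ c, k * (k - 1) = 2 * c := by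
    have h := Nat.even_mul_succ_self (k - 1)
    rw [show k - 1 + 1 = k from by omega, mul_comm] at h
    exact ⟨h.choose, by have := h.choose_spec; omega⟩
  have h1 : k * (k - 1) / 2 = c := by rw [hc]; exact Nat.mul_div_cancel_left c (by norm_num)
  have h2 : (k : ℤ) * ((k : ℤ) - 1) = 2 * c := by
    have : ((k * (k - 1) : ℕ) : ℤ) = (k : ℤ) * ((k : ℤ) - 1) := by push_cast [Nat.cast_sub hk]; ring
    rw [← this, hc]; push_cast; ring
  rw [h1, half_eq h2]

lemma exp_eq (u v : ℤ) :
    u * (u - 1) / 2 + (-v) * u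
      = v * (v - 1) / 2 + (-v) * v + (u - v) * ((u - v) - 1) / 2 := by
  obtain ⟨a, ha⟩ : Even (u * (u - 1)) := by simpa [mul_comm] using Int.even_mul_succ_self (u - 1)
  obtain ⟨b, hb⟩ : Even (v * (v - 1)) := by simpa [mul_comm] using Int.even_mul_succ_self (v - 1)
  obtain ⟨c, hc⟩ : Even ((u - v) * ((u - v) - 1)) := by
    simpa [mul_comm] using Int.even_mul_succ_self ((u - v) - 1)
  rw [half_eq (by omega : u * (u - 1) = 2 * a), half_eq (by omega : v * (v - 1) = 2 * b),
    half_eq (by omega : (u - v) * ((u - v) - 1) = 2 * c)]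
  have h2 : 2 * (a + (-v) * u) = 2 * (b + (-v) * v + c) := by
    have ha' : u * (u - 1) = 2 * a := by omega
    have hb' : v * (v - 1) = 2 * b := by omega
    have hc' : (u - v) * ((u - v) - 1) = 2 * c := by omega
    linear_combination hb' + hc' - ha'
  exact mul_left_cancel₀ two_ne_zero h2

lemma zpow_split (hq0 : q ≠ 0) (i N : ℕ) :
    q ^ ((i : ℤ) - N) = q ^ i * ((q : ℂ) ^ (N : ℤ))⁻¹ := by
  rw [zpow_sub₀ hq0, zpow_natCast, div_eq_mul_inv]

/-- Finite Jacobi triple product. -/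
lemma finiteJTP (hq : ‖q‖ < 1) (hq0 : q ≠ 0) (hz : z ≠ 0) (N : ℕ) :
    (∏ i ∈ Finset.range N, (1 - q ^ i * z)) * (∏ i ∈ Finset.range N, (1 - q ^ i * (q / z)))
      = ∑ k ∈ Finset.range (2 * N + 1), gb q (2 * N) k * tt z q ((k : ℤ) - N) := by
  have hg := gauss hq (2 * N) (-(q ^ (-(N : ℤ)) * z))
  set t : ℂ := -(q ^ (-(N : ℤ)) * z) with ht
  set C0 : ℂ := (-1 : ℂ) ^ N * q ^ (N * (N - 1) / 2 : ℕ) * (((q : ℂ) ^ (N : ℤ))⁻¹ * z) ^ N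
    with hC0
  have hA : ∏ i ∈ Finset.range (2 * N), (1 + q ^ i * t)
      = ∏ i ∈ Finset.range (2 * N), (1 - q ^ ((i : ℤ) - N) * z) := by
    refine Finset.prod_congr rfl fun i _ => ?_
    rw [ht, zpow_split hq0, zpow_neg, zpow_natCast]
    ring
  have hB : ∏ i ∈ Finset.range (2 * N), (1 - q ^ ((i : ℤ) - N) * z)
      = (∏ i ∈ Finset.range N, (1 - q ^ ((i : ℤ) - N) * z))
        * ∏ i ∈ Finset.range N, (1 - q ^ i * z) := by
    rw [two_mul, Finset.prod_range_add]
    congr 1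
    refine Finset.prod_congr rfl fun i _ => ?_
    have : ((N + i : ℕ) : ℤ) - N = (i : ℕ) := by push_cast; ring
    rw [this, zpow_natCast]
  have hC : (∏ i ∈ Finset.range N, (1 - q ^ ((i : ℤ) - N) * z))
      = C0 * ∏ i ∈ Finset.range N, (1 - q ^ i * (q / z)) := by
    have step1 : ∀ i ∈ Finset.range N,
        1 - q ^ ((i : ℤ) - N) * z
          = ((-1) * q ^ i * (((q : ℂ) ^ (N : ℤ))⁻¹ * z)) * (1 - q ^ ((N : ℤ) - i) * z⁻¹) := by
      intro i _
      have key : (q : ℂ) ^ (i : ℕ) * ((q : ℂ) ^ (N : ℤ))⁻¹ * q ^ ((N : ℤ) - i) = 1 := by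
        rw [← zpow_natCast q i, ← zpow_neg, ← zpow_add₀ hq0, ← zpow_add₀ hq0,
          show (i : ℤ) + -(N : ℤ) + ((N : ℤ) - i) = 0 from by ring, zpow_zero]
      have h2 : z * z⁻¹ = 1 := mul_inv_cancel₀ hz
      rw [zpow_split hq0]
      linear_combination (-(z * z⁻¹)) * key - h2
    rw [Finset.prod_congr rfl step1, Finset.prod_mul_distrib, hC0]
    congr 1
    · rw [Finset.prod_mul_distrib, Finset.prod_mul_distrib, Finset.prod_const,
        Finset.prod_const, Finset.prod_pow_eq_pow_sum, Finset.sum_range_id,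
        Finset.card_range]
    · rw [← Finset.prod_range_reflect]
      refine Finset.prod_congr rfl fun i hi => ?_
      rw [Finset.mem_range] at hi
      have e0 : (N : ℤ) - ((N - 1 - i : ℕ) : ℤ) = (i : ℤ) + 1 := by omega
      have e1 : q ^ ((i : ℤ) + 1) = q ^ i * q := by
        rw [zpow_add₀ hq0, zpow_natCast, zpow_one]
      rw [e0, e1, div_eq_mul_inv]
      ring
  -- per-term identity on the RHS of Gauss
  have hD : ∀ k ∈ Finset.range (2 * N + 1),
      gb q (2 * N) k * q ^ (k * (k - 1) / 2 : ℕ) * t ^ k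
        = C0 * (gb q (2 * N) k * tt z q ((k : ℤ) - N)) := by
    intro k _
    have hts : t ^ k = (-1 : ℂ) ^ k * (q ^ (-(N : ℤ))) ^ k * z ^ k := by
      rw [ht, neg_pow, mul_pow]; ring
    have hsign : (-1 : ℂ) ^ ((k : ℤ) - N) = (-1 : ℂ) ^ k * (-1 : ℂ) ^ N := by
      rw [zpow_sub₀ (by norm_num : (-1 : ℂ) ≠ 0), zpow_natCast, zpow_natCast,
        div_eq_mul_inv, ← inv_pow, inv_neg, inv_one]
    have hzz : (z : ℂ) ^ (k : ℕ) = z ^ (N : ℕ) * z ^ ((k : ℤ) - N) := by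
      rw [← zpow_natCast z k, ← zpow_natCast z N, ← zpow_add₀ hz]
      congr 1; ring
    have hqpow : (q : ℂ) ^ (k * (k - 1) / 2 : ℕ) * (q ^ (-(N : ℤ))) ^ k
        = q ^ (N * (N - 1) / 2 : ℕ) * (((q : ℂ) ^ (N : ℤ))⁻¹) ^ N
          * q ^ (((k : ℤ) - N) * (((k : ℤ) - N) - 1) / 2) := by
      rw [← zpow_neg, ← zpow_natCast q (k * (k - 1) / 2), ← zpow_natCast (q ^ (-(N : ℤ))) k,
        ← zpow_mul, ← zpow_add₀ hq0, ← zpow_natCast q (N * (N - 1) / 2),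
        ← zpow_natCast (q ^ (-(N : ℤ))) N, ← zpow_mul, ← zpow_add₀ hq0, ← zpow_add₀ hq0]
      congr 1
      rw [castTri, castTri]
      linear_combination exp_eq (k : ℤ) (N : ℤ)
    have hnn : (-1 : ℂ) ^ N * (-1 : ℂ) ^ N = 1 := by rw [← mul_pow]; norm_num
    rw [tt, hts, hsign, hC0, mul_pow]
    set G := gb q (2 * N) k
    set TIE := q ^ (N * (N - 1) / 2 : ℕ) * (((q : ℂ) ^ (N : ℤ))⁻¹) ^ N
      * q ^ (((k : ℤ) - N) * (((k : ℤ) - N) - 1) / 2) with hTIE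
    linear_combination (G * (-1:ℂ)^k * z ^ k) * hqpow + (G * (-1:ℂ)^k * TIE) * hzz
      - (G * (-1:ℂ)^k * TIE * z ^ (N : ℕ) * z ^ ((k : ℤ) - N)) * hnn
  have hC0ne : C0 ≠ 0 := by
    rw [hC0]
    apply mul_ne_zero (mul_ne_zero (pow_ne_zero _ (by norm_num)) (pow_ne_zero _ hq0))
    exact pow_ne_zero _ (mul_ne_zero (inv_ne_zero (zpow_ne_zero _ hq0)) hz)
  apply mul_left_cancel₀ hC0ne
  calc C0 * ((∏ i ∈ Finset.range N, (1 - q ^ i * z))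
          * ∏ i ∈ Finset.range N, (1 - q ^ i * (q / z)))
      = (∏ i ∈ Finset.range N, (1 - q ^ ((i : ℤ) - N) * z))
          * ∏ i ∈ Finset.range N, (1 - q ^ i * z) := by rw [hC]; ring
    _ = ∑ k ∈ Finset.range (2 * N + 1), gb q (2 * N) k * q ^ (k * (k - 1) / 2 : ℕ) * t ^ k := by
        rw [← hB, ← hA, hg]
    _ = C0 * ∑ k ∈ Finset.range (2 * N + 1), gb q (2 * N) k * tt z q ((k : ℤ) - N) := by
        rw [Finset.sum_congr rfl hD, ← Finset.mul_sum]
end part3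

lemma half_eq' {u a : ℤ} (h : u = 2 * a) : u / 2 = a := by
  rw [h]; exact Int.mul_ediv_cancel_left a two_ne_zero

lemma tri_int (m : ℤ) : m * (m - 1) / 2 + m = (m + 1) * m / 2 := by
  obtain ⟨a, ha⟩ : Even (m * (m - 1)) := by simpa [mul_comm] using Int.even_mul_succ_self (m - 1)
  obtain ⟨b, hb⟩ : Even ((m + 1) * m) := by simpa [mul_comm] using Int.even_mul_succ_self m
  rw [half_eq' (by omega : m * (m - 1) = 2 * a), half_eq' (by omega : (m + 1) * m = 2 * b)]
  have h2 : 2 * (a + m) = 2 * b := by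
    linear_combination (by omega : (m + 1) * m = 2 * b) - (by omega : m * (m - 1) = 2 * a)
  omega

section helpers
variable {q x z : ℂ}

lemma exists_pos_le_of_tendsto {u : ℕ → ℝ} {L : ℝ} (hL : 0 < L)
    (h : Tendsto u atTop (𝓝 L)) (hu : ∀ k, 0 < u k) : ∃ δ, 0 < δ ∧ ∀ k, δ ≤ u k := by
  have hev : ∀ᶠ k in atTop, L / 2 < u k := h.eventually (eventually_gt_nhds (by linarith))
  obtain ⟨K, hK⟩ := eventually_atTop.mp hev
  have hne : (Finset.range (K + 1)).Nonempty := ⟨0, by simp⟩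
  refine ⟨min (L / 2) ((Finset.range (K + 1)).inf' hne u), ?_, ?_⟩
  · apply lt_min (by linarith)
    exact (Finset.lt_inf'_iff hne).mpr fun k _ => hu k
  · intro k
    rcases le_or_gt k K with hk | hk
    · exact le_trans (min_le_right _ _) (Finset.inf'_le u (by simp; omega))
    · exact le_trans (min_le_left _ _) (hK k hk.le).le

lemma norm_tt (hq0 : q ≠ 0) (hz : z ≠ 0) (n : ℤ) :
    ‖tt z q n‖ = ‖q‖ ^ (n * (n - 1) / 2) * ‖z‖ ^ n := by
  simp only [tt, norm_mul, norm_zpow]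
  simp

lemma summable_norm_tt (hq : ‖q‖ < 1) (hq0 : q ≠ 0) (hz : z ≠ 0) :
    Summable (fun n : ℤ => ‖tt z q n‖) := by
  set a := ‖q‖ with haq
  set b := ‖z‖ with hbz
  have ha0 : 0 < a := norm_pos_iff.mpr hq0
  have hb0 : 0 < b := norm_pos_iff.mpr hz
  have hpos : ∀ n : ℤ, 0 < ‖tt z q n‖ := by
    intro n
    rw [norm_tt hq0 hz]
    exact mul_pos (zpow_pos ha0 _) (zpow_pos hb0 _)
  have key : ∀ m : ℤ, ‖tt z q (m + 1)‖ / ‖tt z q m‖ = a ^ m * b := by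
    intro m
    rw [norm_tt hq0 hz, norm_tt hq0 hz]
    have e1 : a ^ ((m + 1) * (m + 1 - 1) / 2) = a ^ (m * (m - 1) / 2) * a ^ m := by
      rw [← zpow_add₀ ha0.ne', tri_int]
      norm_num
    have e2 : b ^ (m + 1) = b ^ m * b := by rw [zpow_add_one₀ hb0.ne']
    rw [e1, e2]
    field_simp
    ring
  apply Summable.of_nat_of_neg_add_one
  · apply summable_of_ratio_test_tendsto_lt_one (l := 0) one_pos
      (Eventually.of_forall fun n => (hpos _).ne')
    have h0 : Tendsto (fun n : ℕ => a ^ n * b) atTop (𝓝 0) := by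
      simpa using (tendsto_pow_atTop_nhds_zero_of_lt_one ha0.le hq).mul_const b
    refine h0.congr fun n => ?_
    rw [Real.norm_of_nonneg (norm_nonneg _), Real.norm_of_nonneg (norm_nonneg _),
      show ((n + 1 : ℕ) : ℤ) = (n : ℤ) + 1 from by push_cast; ring, key, zpow_natCast]
  · apply summable_of_ratio_test_tendsto_lt_one (l := 0) one_pos
      (Eventually.of_forall fun n => (hpos _).ne')
    have h0 : Tendsto (fun n : ℕ => a ^ (n + 2) * b⁻¹) atTop (𝓝 0) := by
      have := (tendsto_pow_atTop_nhds_zero_of_lt_one ha0.le hq).mul_const (a ^ 2 * b⁻¹)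
      simp only [zero_mul] at this
      refine this.congr fun n => ?_
      rw [pow_add]; ring
    refine h0.congr fun n => ?_
    rw [Real.norm_of_nonneg (norm_nonneg _), Real.norm_of_nonneg (norm_nonneg _)]
    have hk := key (-((n : ℤ) + 1 + 1))
    have hfm := (hpos (-((n : ℤ) + 1 + 1))).ne'
    rw [show -(((n + 1 : ℕ) : ℤ) + 1) = -((n : ℤ) + 1 + 1) from by push_cast; ring,
      show -((n : ℤ) + 1) = -((n : ℤ) + 1 + 1) + 1 from by ring]
    have h3 : ‖tt z q (-((n : ℤ) + 1 + 1) + 1)‖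
        = a ^ (-((n : ℤ) + 1 + 1)) * b * ‖tt z q (-((n : ℤ) + 1 + 1))‖ := by
      rw [← hk, div_mul_cancel₀ _ hfm]
    rw [h3, mul_comm (a ^ (-((n : ℤ) + 1 + 1)) * b), div_mul_eq_div_div, div_self hfm,
      one_div, mul_inv, ← zpow_neg, neg_neg, ← zpow_natCast a (n + 2)]
    norm_num
    left
    congr 1
end helpers

section db
variable {q c : ℂ}

/-- uniform lower bound for `‖1 - qⁿ c‖`, `n ∈ ℤ`. -/
lemma denom_bound (hq : ‖q‖ < 1) (hq0 : q ≠ 0) (hc : c ≠ 0)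
    (hgen : ∀ n : ℤ, c ≠ q ^ n) : ∃ D, 0 < D ∧ ∀ n : ℤ, D ≤ ‖1 - q ^ n * c‖ := by
  have ha0 : 0 < ‖q‖ := norm_pos_iff.mpr hq0
  have hc0 : 0 < ‖c‖ := norm_pos_iff.mpr hc
  have hne : ∀ n : ℤ, 1 - q ^ n * c ≠ 0 := by
    intro n h
    have : q ^ n * c = 1 := by linear_combination -h
    have : c = q ^ (-n) := by
      have hqn : q ^ n ≠ 0 := zpow_ne_zero n hq0
      rw [zpow_neg]
      field_simp
      linear_combination this
    exact hgen (-n) this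
  obtain ⟨K, hK⟩ := exists_pow_lt_of_lt_one
    (lt_min (by positivity : (0:ℝ) < 1 / (2 * ‖c‖) )
      (by positivity : (0:ℝ) < ‖c‖ / 2)) hq
  have hKsmall : ‖q‖ ^ (K : ℤ) ≤ 1 / (2 * ‖c‖) := by
    rw [zpow_natCast]; exact le_trans hK.le (min_le_left _ _)
  have hKsmall2 : ‖q‖ ^ (K : ℤ) ≤ ‖c‖ / 2 := by
    rw [zpow_natCast]; exact le_trans hK.le (min_le_right _ _)
  have habs : ∀ n : ℤ, ‖q ^ n * c‖ = ‖q‖ ^ n * ‖c‖ := by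
    intro n; rw [norm_mul, norm_zpow]
  -- upper range
  have hup : ∀ n : ℤ, (K : ℤ) ≤ n → (1:ℝ)/2 ≤ ‖1 - q ^ n * c‖ := by
    intro n hn
    have h1 : ‖q ^ n * c‖ ≤ 1/2 := by
      rw [habs]
      calc ‖q‖ ^ n * ‖c‖ ≤ ‖q‖ ^ (K:ℤ) * ‖c‖ :=
            mul_le_mul_of_nonneg_right (zpow_le_zpow_right_of_le_one₀ ha0 hq.le hn) hc0.le
        _ ≤ 1 / (2 * ‖c‖) * ‖c‖ := mul_le_mul_of_nonneg_right hKsmall hc0.le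
        _ = 1/2 := by field_simp
    have := norm_sub_norm_le (1 : ℂ) (q ^ n * c)
    simp only [norm_one] at this ⊢
    linarith
  -- lower range
  have hdown : ∀ n : ℤ, n ≤ -(K : ℤ) → (1:ℝ) ≤ ‖1 - q ^ n * c‖ := by
    intro n hn
    have h1 : (2:ℝ) ≤ ‖q ^ n * c‖ := by
      rw [habs]
      have : ‖q‖ ^ n ≥ ‖q‖ ^ (-(K:ℤ)) :=
        zpow_le_zpow_right_of_le_one₀ ha0 hq.le hn
      have h2 : ‖q‖ ^ (-(K:ℤ)) * ‖c‖ ≥ 2 := by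
        rw [zpow_neg, ge_iff_le, ← div_le_iff₀ hc0]
        rw [le_inv_comm₀ (by positivity) (zpow_pos ha0 _)]
        calc ‖q‖ ^ (K:ℤ) ≤ ‖c‖ / 2 := hKsmall2
          _ ≤ (2 / ‖c‖)⁻¹ := by rw [inv_div]
        
      calc (2:ℝ) ≤ ‖q‖ ^ (-(K:ℤ)) * ‖c‖ := h2
        _ ≤ ‖q‖ ^ n * ‖c‖ := mul_le_mul_of_nonneg_right this hc0.le
    have := norm_sub_norm_le (q ^ n * c) (1 : ℂ)
    rw [← norm_neg (q ^ n * c - 1)] at this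
    simp only [neg_sub, norm_one] at this ⊢
    linarith
  -- middle
  have hmidne : (Finset.Icc (-(K:ℤ)) (K:ℤ)).Nonempty := ⟨0, by simp⟩
  set m := (Finset.Icc (-(K:ℤ)) (K:ℤ)).inf' hmidne (fun n => ‖1 - q ^ n * c‖) with hm
  have hmpos : 0 < m :=
    (Finset.lt_inf'_iff hmidne).mpr fun n _ => norm_pos_iff.mpr (hne n)
  refine ⟨min (1/2) m, lt_min (by norm_num) hmpos, fun n => ?_⟩
  rcases le_or_gt (K:ℤ) n with h | h
  · exact le_trans (min_le_left _ _) (hup n h)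
  rcases le_or_gt n (-(K:ℤ)) with h' | h'
  · exact le_trans (min_le_left _ _) (le_trans (by norm_num) (hdown n h'))
  · exact le_trans (min_le_right _ _)
      (Finset.inf'_le _ (Finset.mem_Icc.mpr ⟨h'.le, h.le⟩))
end db

section jtp
variable {q z : ℂ}

lemma jtp (hq : ‖q‖ < 1) (hq0 : q ≠ 0) (hz : z ≠ 0)
    (hzf1 : ∀ i : ℕ, 1 - q ^ i * z ≠ 0) (hzf2 : ∀ i : ℕ, 1 - q ^ i * (q / z) ≠ 0) :
    HasSum (fun n : ℤ => tt z q n) (qPoch z q * qPoch (q / z) q * qPoch q q) := by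
  have hPz := qp_tendsto hq hzf1
  have hPqz := qp_tendsto hq hzf2
  have hfq : ∀ i : ℕ, 1 - q ^ i * q ≠ 0 := one_sub_pow_ne hq
  have hPq : Tendsto (fun M : ℕ => pq q M) atTop (𝓝 (qPoch q q)) := qp_tendsto hq hfq
  have hPqne : qPoch q q ≠ 0 := qp_ne_zero hq hfq
  have hpq_pos : ∀ M, 0 < ‖pq q M‖ := fun M => norm_pos_iff.mpr (pq_ne_zero hq M)
  obtain ⟨δ, hδ0, hδ⟩ := exists_pos_le_of_tendsto (norm_pos_iff.mpr hPqne) hPq.norm hpq_pos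
  -- uniform upper bound for ‖pq q M‖
  have hsumgeo : Summable (fun i : ℕ => ‖q ^ i * q‖) := by
    simpa [norm_mul, norm_pow] using
      (summable_geometric_of_lt_one (norm_nonneg q) hq).mul_right ‖q‖
  set CU := Real.exp (∑' i : ℕ, ‖q ^ i * q‖) with hCUdef
  have hCU : ∀ M, ‖pq q M‖ ≤ CU := by
    intro M
    rw [pq, norm_prod]
    calc ∏ i ∈ Finset.range M, ‖1 - q ^ i * q‖
        ≤ ∏ i ∈ Finset.range M, Real.exp ‖q ^ i * q‖ := by
          apply Finset.prod_le_prod (fun i _ => norm_nonneg _)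
          intro i _
          calc ‖1 - q ^ i * q‖ ≤ ‖(1:ℂ)‖ + ‖q ^ i * q‖ := norm_sub_le _ _
            _ = ‖q ^ i * q‖ + 1 := by rw [norm_one]; ring
            _ ≤ Real.exp ‖q ^ i * q‖ := Real.add_one_le_exp _
      _ = Real.exp (∑ i ∈ Finset.range M, ‖q ^ i * q‖) := by rw [Real.exp_sum]
      _ ≤ CU := by
          rw [hCUdef]
          apply Real.exp_le_exp.mpr
          exact Summable.sum_le_tsum _ (fun i _ => norm_nonneg _) hsumgeo
  have hCU0 : 0 < CU := Real.exp_pos _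
  set B := CU / (δ * δ) with hBdef
  have hgbB : ∀ M k : ℕ, ‖gb q M k‖ ≤ B := by
    intro M k
    rw [gb, norm_div, norm_mul, hBdef]
    exact div_le_div₀ hCU0.le (hCU M) (mul_pos hδ0 hδ0)
      (mul_le_mul (hδ k) (hδ (M - k)) hδ0.le (norm_nonneg _))
  set F : ℕ → ℤ → ℂ := fun N n =>
    if n ∈ Finset.Icc (-(N:ℤ)) (N:ℤ) then gb q (2*N) ((n + N).toNat) * tt z q n else 0 with hF
  have hFsum : ∀ N, ∑' n, F N n
      = (∏ i ∈ Finset.range N, (1 - q ^ i * z)) * ∏ i ∈ Finset.range N, (1 - q ^ i * (q / z)) := by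
    intro N
    rw [tsum_eq_sum (s := Finset.Icc (-(N:ℤ)) (N:ℤ)) (fun n hn => by
      simp only [hF]; rw [if_neg hn])]
    rw [finiteJTP hq hq0 hz N]
    refine Finset.sum_nbij' (fun n : ℤ => (n + N).toNat) (fun k : ℕ => (k : ℤ) - N)
      ?_ ?_ ?_ ?_ ?_
    · intro n hn; rw [Finset.mem_Icc] at hn; rw [Finset.mem_range]; omega
    · intro k hk; rw [Finset.mem_range] at hk; rw [Finset.mem_Icc]; omega
    · intro n hn; rw [Finset.mem_Icc] at hn; omega
    · intro k hk; rw [Finset.mem_range] at hk; omega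
    · intro n hn
      simp only [hF]
      rw [if_pos hn]
      rw [Finset.mem_Icc] at hn
      congr 2
      omega
  have hLim1 : Tendsto (fun N => ∑' n, F N n) atTop
      (𝓝 (qPoch z q * qPoch (q / z) q)) := by
    refine (hPz.mul hPqz).congr fun N => (hFsum N).symm
  have hbound_sum : Summable (fun n : ℤ => B * ‖tt z q n‖) :=
    (summable_norm_tt hq hq0 hz).mul_left B
  have hLim2 : Tendsto (fun N => ∑' n, F N n) atTop
      (𝓝 (∑' n : ℤ, (qPoch q q)⁻¹ * tt z q n)) := by
    apply tendsto_tsum_of_dominated_convergence hbound_sum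
    · intro n
      have hev : (fun N : ℕ => pq q (2*N) / (pq q ((n + N).toNat) * pq q (2*N - (n + N).toNat))
          * tt z q n) =ᶠ[atTop] (fun N => F N n) := by
        filter_upwards [eventually_ge_atTop n.natAbs] with N hN
        simp only [hF]
        rw [if_pos (by rw [Finset.mem_Icc]; omega), gb]
      have ht1 : Tendsto (fun N : ℕ => 2 * N) atTop atTop :=
        tendsto_atTop.mpr fun b => eventually_atTop.mpr ⟨b, fun N hN => by omega⟩
      have ht2 : Tendsto (fun N : ℕ => ((n : ℤ) + N).toNat) atTop atTop :=
        tendsto_atTop.mpr fun b => eventually_atTop.mpr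
          ⟨b + n.natAbs, fun N hN => by omega⟩
      have ht3 : Tendsto (fun N : ℕ => 2 * N - ((n : ℤ) + N).toNat) atTop atTop :=
        tendsto_atTop.mpr fun b => eventually_atTop.mpr
          ⟨b + n.natAbs, fun N hN => by omega⟩
      have hquot : Tendsto (fun N : ℕ => pq q (2*N) / (pq q ((n + N).toNat)
          * pq q (2*N - (n + N).toNat))) atTop
          (𝓝 (qPoch q q / (qPoch q q * qPoch q q))) :=
        Tendsto.div (hPq.comp ht1) ((hPq.comp ht2).mul (hPq.comp ht3))
          (mul_ne_zero hPqne hPqne)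
      have heqv : qPoch q q / (qPoch q q * qPoch q q) = (qPoch q q)⁻¹ := by
        field_simp
      rw [← heqv]
      exact Tendsto.congr' hev (hquot.mul_const (tt z q n))
    · apply Eventually.of_forall
      intro N n
      simp only [hF]
      split_ifs with h
      · rw [norm_mul]
        exact mul_le_mul_of_nonneg_right (hgbB _ _) (norm_nonneg _)
      · simp only [norm_zero]
        positivity
  have heq : qPoch z q * qPoch (q / z) q = (qPoch q q)⁻¹ * ∑' n, tt z q n := by
    have h := tendsto_nhds_unique hLim1 hLim2
    rw [h, tsum_mul_left]
  have htt : Summable (fun n : ℤ => tt z q n) := (summable_norm_tt hq hq0 hz).of_norm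
  have hval : ∑' n, tt z q n = qPoch z q * qPoch (q / z) q * qPoch q q := by
    rw [heq, mul_comm ((qPoch q q)⁻¹), mul_assoc, inv_mul_cancel₀ hPqne, mul_one]
  exact hval ▸ htt.hasSum
end jtp

section main
variable {q x z : ℂ}

lemma tt_rec (hq0 : q ≠ 0) (hz : z ≠ 0) (n : ℤ) :
    tt z q n = -(tt z q (n - 1)) * (q ^ (n - 1) * z) := by
  rw [tt, tt]
  have e1 : (-1 : ℂ) ^ (n - 1) * (-1 : ℂ) = (-1 : ℂ) ^ n := by
    rw [← zpow_add_one₀ (by norm_num : (-1 : ℂ) ≠ 0)]; congr 1; ring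
  have e2 : q ^ ((n - 1) * ((n - 1) - 1) / 2) * q ^ (n - 1) = q ^ (n * (n - 1) / 2) := by
    rw [← zpow_add₀ hq0]
    congr 1
    rw [tri_int (n - 1)]
    congr 1
    ring
  have e3 : z ^ (n - 1) * z = z ^ n := by
    rw [← zpow_add_one₀ hz]; congr 1; ring
  rw [← e1, ← e2, ← e3]; ring

/-- `m(qx, z; q) = 1 - x m(x, z; q)`. -/
theorem appell_shift_x (q x z : ℂ) (hq : ‖q‖ < 1) (hq0 : q ≠ 0)
    (hx : x ≠ 0) (hz : z ≠ 0)
    (hzgen : ∀ n : ℤ, z ≠ q ^ n) (hxzgen : ∀ n : ℤ, x * z ≠ q ^ n) :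
    appell (q * x) z q = 1 - x * appell x z q := by
  -- nonvanishing of the factors of jtheta
  have hzf1 : ∀ i : ℕ, 1 - q ^ i * z ≠ 0 := by
    intro i h
    apply hzgen (-(i : ℤ))
    have h1 : q ^ (i : ℕ) * z = 1 := by linear_combination -h
    rw [zpow_neg, zpow_natCast]
    have hpow : (q : ℂ) ^ (i : ℕ) ≠ 0 := pow_ne_zero _ hq0
    field_simp
    linear_combination h1
  have hzf2 : ∀ i : ℕ, 1 - q ^ i * (q / z) ≠ 0 := by
    intro i h
    apply hzgen ((i : ℤ) + 1)
    have h1 : q ^ (i : ℕ) * (q / z) = 1 := by linear_combination -h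
    have h2 : q ^ (i : ℕ) * q = z := by
      field_simp at h1
      linear_combination h1
    rw [zpow_add₀ hq0, zpow_natCast, zpow_one, h2]
  have hfq : ∀ i : ℕ, 1 - q ^ i * q ≠ 0 := one_sub_pow_ne hq
  have hJ : HasSum (fun n : ℤ => tt z q n) (jtheta z q) := by
    rw [jtheta]; exact jtp hq hq0 hz hzf1 hzf2
  have hjne : jtheta z q ≠ 0 := by
    rw [jtheta]
    exact mul_ne_zero (mul_ne_zero (qp_ne_zero hq hzf1) (qp_ne_zero hq hzf2))
      (qp_ne_zero hq hfq)
  have hc : x * z ≠ 0 := mul_ne_zero hx hz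
  obtain ⟨D, hD0, hD⟩ := denom_bound hq hq0 hc hxzgen
  have dne : ∀ n : ℤ, 1 - q ^ n * (x * z) ≠ 0 := fun n =>
    norm_pos_iff.mp (lt_of_lt_of_le hD0 (hD n))
  set A : ℤ → ℂ := fun n => tt z q n / (1 - q ^ n * (x * z)) with hAdef
  set B : ℤ → ℂ := fun n => tt z q n / (1 - q ^ (n - 1) * (x * z)) with hBdef
  have hsummand : ∀ (f : ℤ → ℂ), Summable (fun n : ℤ => tt z q n / (1 - q ^ (f 0) * (x*z))) →
      True := fun _ _ => trivial
  have SA : Summable A := by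
    apply Summable.of_norm
    apply Summable.of_norm_bounded (g := fun n : ℤ => ‖tt z q n‖ / D)
      ((summable_norm_tt hq hq0 hz).div_const D)
    intro n
    rw [norm_norm, hAdef]
    dsimp only
    rw [norm_div]
    exact div_le_div_of_nonneg_left (norm_nonneg _) hD0 (hD n)
  have SB : Summable B := by
    apply Summable.of_norm
    apply Summable.of_norm_bounded (g := fun n : ℤ => ‖tt z q n‖ / D)
      ((summable_norm_tt hq hq0 hz).div_const D)
    intro n
    rw [norm_norm, hBdef]
    dsimp only
    rw [norm_div]
    exact div_le_div_of_nonneg_left (norm_nonneg _) hD0 (hD (n - 1))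
  have hden : ∀ n : ℤ, 1 - q ^ (n - 1) * (q * x) * z = 1 - q ^ n * (x * z) := by
    intro n
    congr 1
    rw [zpow_sub_one₀ hq0]
    field_simp
  have hAppA : appell (q * x) z q = (jtheta z q)⁻¹ * ∑' n, A n := by
    rw [appell]
    congr 1
    refine tsum_congr fun n => ?_
    rw [hden n]
    simp only [hAdef, tt]
  have hAppB : appell x z q = (jtheta z q)⁻¹ * ∑' n, B n := by
    rw [appell]
    congr 1
    refine tsum_congr fun n => ?_
    rw [hBdef]
    dsimp only
    rw [tt, mul_assoc (q ^ (n-1))]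
  have hshiftA : ∑' n : ℤ, A (n - 1) = ∑' n, A n := by
    simpa using (Equiv.subRight (1 : ℤ)).tsum_eq A
  have SAshift : Summable (fun n : ℤ => A (n - 1)) := by
    have := ((Equiv.subRight (1 : ℤ)).summable_iff (f := A)).mpr SA
    exact this
  have hpt : ∀ n : ℤ, A (n - 1) + x * B n = tt z q (n - 1) := by
    intro n
    have hd := dne (n - 1)
    have hnum : tt z q (n - 1) + x * tt z q n = tt z q (n - 1) * (1 - q ^ (n - 1) * (x * z)) := by
      rw [tt_rec hq0 hz n]
      ring
    rw [hAdef, hBdef]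
    dsimp only
    rw [show tt z q (n-1) / (1 - q ^ (n-1) * (x*z)) + x * (tt z q n / (1 - q ^ (n-1) * (x*z)))
        = (tt z q (n-1) + x * tt z q n) / (1 - q ^ (n-1) * (x*z)) from by ring]
    rw [hnum, mul_div_assoc, div_self hd, mul_one]
  have hshiftT : ∑' n : ℤ, tt z q (n - 1) = jtheta z q := by
    rw [show ∑' n : ℤ, tt z q (n - 1) = ∑' n, tt z q n from by
      simpa using (Equiv.subRight (1 : ℤ)).tsum_eq (tt z q), hJ.tsum_eq]
  have key : (∑' n, A n) + x * ∑' n, B n = jtheta z q := by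
    have h2 : ∑' n : ℤ, (A (n - 1) + x * B n) = (∑' n : ℤ, A (n - 1)) + ∑' n : ℤ, x * B n :=
      Summable.tsum_add SAshift (SB.mul_left x)
    have h1 : ∑' n : ℤ, (A (n - 1) + x * B n) = ∑' n : ℤ, tt z q (n - 1) := tsum_congr hpt
    rw [← hshiftA, ← tsum_mul_left, ← h2, h1, hshiftT]
  have hinv : (jtheta z q)⁻¹ * jtheta z q = 1 := inv_mul_cancel₀ hjne
  rw [hAppA, hAppB]
  linear_combination (jtheta z q)⁻¹ * key + hinv
end main
end
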